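/- With φ the Fox function, for every odd l and every k with 2k > l, φ(l,2k) = 0. -/
import Mathlib


theorem stmt (φ : ℕ → ℕ → ℤ)
    (h0 : ∀ k : ℕ, φ 0 k = 1)
    (hdiag : ∀ k : ℕ, φ k k = (-1 : ℤ) ^ k)
    (hrec : ∀ l k : ℕ, 0 < l → l < k →
      φ l k = (-1 : ℤ) ^ (k - l + 1) * φ (l - 1) (k - 1) + φ l (k - 1)) :
    ∀ l k : ℕ, Odd l → l < 2 * k → φ l (2 * k) = 0 := by
  suffices H : ∀ b : ℕ,
      (∀ a, 2*a+1 < 2*b → φ (2*a+1) (2*b) = 0) ∧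
      (∀ a, a ≤ b → φ (2*a+1) (2*b+1) = -φ (2*a) (2*b+1)) by
    intro l k hl hlt
    obtain ⟨a, rfl⟩ := hl
    exact (H k).1 a hlt
  intro b
  induction b with
  | zero =>
    constructor
    · intro a h; omega
    · intro a ha
      have : a = 0 := by omega
      subst this
      rw [hdiag 1, h0 1]
      norm_num
  | succ b ih =>
    obtain ⟨ihZ, ihC⟩ := ih
    have Z : ∀ a, 2*a+1 < 2*(b+1) → φ (2*a+1) (2*(b+1)) = 0 := by
      intro a ha
      rw [hrec (2*a+1) (2*(b+1)) (by omega) ha]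
      have he : 2*(b+1) - (2*a+1) + 1 = 2*(b+1-a) := by omega
      have hs : (-1:ℤ) ^ (2*(b+1) - (2*a+1) + 1) = 1 := by
        rw [he]; exact (even_two_mul (b+1-a)).neg_one_pow
      rw [hs, one_mul]
      have e1 : 2*a+1-1 = 2*a := by omega
      have e2 : 2*(b+1)-1 = 2*b+1 := by omega
      rw [e1, e2]
      have := ihC a (by omega)
      linarith
    refine ⟨Z, ?_⟩
    intro a ha
    -- value of φ (2(b+1)) (2(b+1)+1), needed in the diagonal case
    have haux : φ (2*(b+1)) (2*(b+1)+1) = 1 := by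
      rw [hrec (2*(b+1)) (2*(b+1)+1) (by omega) (by omega)]
      have he : 2*(b+1)+1 - 2*(b+1) + 1 = 2 := by omega
      rw [he]
      have e1 : 2*(b+1)-1 = 2*b+1 := by omega
      have e2 : 2*(b+1)+1-1 = 2*(b+1) := by omega
      rw [e1, e2, Z b (by omega), hdiag (2*(b+1))]
      have : Even (2*(b+1)) := even_two_mul (b+1)
      rw [this.neg_one_pow]
      norm_num
    by_cases hab : a = b+1
    · subst hab
      rw [hdiag (2*(b+1)+1), haux]
      have : Odd (2*(b+1)+1) := odd_two_mul_add_one (b+1)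
      rw [this.neg_one_pow]
    · have hab' : a ≤ b := by omega
      have step1 : φ (2*a+1) (2*(b+1)+1) = -φ (2*a) (2*(b+1)) := by
        rw [hrec (2*a+1) (2*(b+1)+1) (by omega) (by omega)]
        have he : 2*(b+1)+1 - (2*a+1) + 1 = 2*(b+1-a)+1 := by omega
        have hs : (-1:ℤ) ^ (2*(b+1)+1 - (2*a+1) + 1) = -1 := by
          rw [he]; exact (odd_two_mul_add_one (b+1-a)).neg_one_pow
        rw [hs]
        have e1 : 2*a+1-1 = 2*a := by omega
        have e2 : 2*(b+1)+1-1 = 2*(b+1) := by omega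
        rw [e1, e2, Z a (by omega)]
        ring
      have step2 : φ (2*a) (2*(b+1)+1) = φ (2*a) (2*(b+1)) := by
        rcases Nat.eq_zero_or_pos a with h | h
        · subst h; simp [h0]
        · rw [hrec (2*a) (2*(b+1)+1) (by omega) (by omega)]
          have he : 2*(b+1)+1 - 2*a + 1 = 2*(b+2-a) := by omega
          have hs : (-1:ℤ) ^ (2*(b+1)+1 - 2*a + 1) = 1 := by
            rw [he]; exact (even_two_mul (b+2-a)).neg_one_pow
          rw [hs, one_mul]
          have e1 : 2*a-1 = 2*(a-1)+1 := by omega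
          have e2 : 2*(b+1)+1-1 = 2*(b+1) := by omega
          rw [e1, e2, Z (a-1) (by omega)]
          ring
      rw [step1, step2]
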